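/- For any multicast discrete memoryless channel and any B with 0 ≤ B ≤ B_max, the multicast capacity-energy function equals its single-letter version: C(B) = sup_{n ≥ 1} (1/n)·C_n(B) = C_1(B). -/

import Mathlib

open scoped BigOperators

noncomputable section

/-- A probability vector on a finite alphabet. -/
def IsProbVec {α : Type} [Fintype α] (p : α → ℝ) : Prop :=
  (∀ a, 0 ≤ p a) ∧ (∑ a, p a) = 1

/-- A (row-stochastic) discrete channel. -/
def IsChannel {α β : Type} [Fintype β] (W : α → β → ℝ) : Prop :=
  ∀ x, (∀ y, 0 ≤ W x y) ∧ (∑ y, W x y) = 1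

/-- The memoryless `n`-letter extension of a channel. -/
def nCh {α β : Type} (W : α → β → ℝ) (n : ℕ) (x : Fin n → α) (y : Fin n → β) : ℝ :=
  ∏ i, W (x i) (y i)

/-- Output distribution induced by input distribution `p` through channel `W`. -/
def outDist {α β : Type} [Fintype α] (p : α → ℝ) (W : α → β → ℝ) (y : β) : ℝ :=
  ∑ x, p x * W x y

/-- Expected value `E[b(Y)]` of an energy function `b` at the channel output. -/
def outEnergy {α β : Type} [Fintype α] [Fintype β] (p : α → ℝ) (W : α → β → ℝ)
    (b : β → ℝ) : ℝ :=
  ∑ y, outDist p W y * b y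

/-- Additive block extension of an energy function. -/
def blockE {β : Type} (b : β → ℝ) {n : ℕ} (y : Fin n → β) : ℝ := ∑ i, b (y i)

/-- Mutual information `I(X;Y)` between the input `X ~ p` and the output of channel `W`. -/
def mutInfo {α β : Type} [Fintype α] [Fintype β] (p : α → ℝ) (W : α → β → ℝ) : ℝ :=
  ∑ x, ∑ y, p x * W x y * Real.log (W x y / outDist p W y)

/-- The `n`-th multicast capacity-energy function with common energy function `b` and
common scalar energy constraint `B`:
`C_n(B) = max_{B-admissible X₁ⁿ} min_ℓ I(X₁ⁿ; Y(ℓ)₁ⁿ)`. -/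
def CnEq {𝓧 𝓨 : Type} [Fintype 𝓧] [Fintype 𝓨] {L : ℕ}
    (W : Fin L → 𝓧 → 𝓨 → ℝ) (b : 𝓨 → ℝ) (B : ℝ) (n : ℕ) : ℝ :=
  sSup { r | ∃ p : (Fin n → 𝓧) → ℝ, IsProbVec p ∧
      (∀ ℓ, (n : ℝ) * B ≤ outEnergy p (nCh (W ℓ) n) (blockE b)) ∧
      r = ⨅ ℓ, mutInfo p (nCh (W ℓ) n) }

/-- The largest commonly deliverable energy:
`B_max = max_q min_ℓ Σ_{x,y} q(x) p_{Y(ℓ)|X}(y|x) b(y)`. -/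
def Bmax {𝓧 𝓨 : Type} [Fintype 𝓧] [Fintype 𝓨] {L : ℕ}
    (W : Fin L → 𝓧 → 𝓨 → ℝ) (b : 𝓨 → ℝ) : ℝ :=
  sSup { r | ∃ q : 𝓧 → ℝ, IsProbVec q ∧ r = ⨅ ℓ, outEnergy q (W ℓ) b }

/-- The multicast capacity-energy function `C(B) = sup_{n ≥ 1} C_n(B)/n`. -/
def CcapEq {𝓧 𝓨 : Type} [Fintype 𝓧] [Fintype 𝓨] {L : ℕ}
    (W : Fin L → 𝓧 → 𝓨 → ℝ) (b : 𝓨 → ℝ) (B : ℝ) : ℝ :=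
  ⨆ n : ℕ+, CnEq W b B n / (n : ℝ)

/-! The bound `C_n(B) ≤ n·C_1(B)` comes from the average input marginal
`q̄ = (1/n) ∑ᵢ P_{Xᵢ}`. Since the energy is additive, `q̄` is `B`-admissible whenever `X₁ⁿ` is.
For each receiver, Gibbs' inequality with the product reference distribution `∏ᵢ (q̄W)(yᵢ)`
bounds `I(X₁ⁿ; Y₁ⁿ)` by `∑ᵢ E[log (W(Yᵢ|Xᵢ) / (q̄W)(Yᵢ))]`. This sum depends on `X₁ⁿ` only
through `q̄`, and it equals `n·I(q̄; W)`. The reverse inequality is the term `n = 1` of the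
supremum. -/

open Finset Real

section Channel

lemma IsChannel.le_one {α β : Type} [Fintype β] {W : α → β → ℝ} (hW : IsChannel W) (x : α)
    (y : β) : W x y ≤ 1 :=
  (hW x).2 ▸ single_le_sum (fun c _ => (hW x).1 c) (mem_univ y)

variable {α β : Type} [Fintype α] [Fintype β] {p : α → ℝ} {W : α → β → ℝ}

lemma outDist_nonneg (hp : ∀ x, 0 ≤ p x) (hW : IsChannel W) (y : β) : 0 ≤ outDist p W y :=
  sum_nonneg fun x _ => mul_nonneg (hp x) ((hW x).1 y)

lemma mul_le_outDist (hp : ∀ x, 0 ≤ p x) (hW : IsChannel W) (x : α) (y : β) :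
    p x * W x y ≤ outDist p W y :=
  single_le_sum (f := fun x => p x * W x y) (fun x _ => mul_nonneg (hp x) ((hW x).1 y))
    (mem_univ x)

lemma sum_sum_mul_eq_one (hp : IsProbVec p) (hW : IsChannel W) :
    ∑ x, ∑ y, p x * W x y = 1 := by
  simp_rw [← mul_sum, (hW _).2, mul_one, hp.2]

lemma sum_outDist (hp : IsProbVec p) (hW : IsChannel W) : ∑ y, outDist p W y = 1 := by
  rw [← sum_sum_mul_eq_one hp hW, sum_comm]
  rfl

lemma outEnergy_eq_sum_sum (p : α → ℝ) (W : α → β → ℝ) (b : β → ℝ) :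
    outEnergy p W b = ∑ x, ∑ y, p x * W x y * b y := by
  simp_rw [outEnergy, outDist, sum_mul]
  exact sum_comm

lemma mutInfo_nonneg (hp : IsProbVec p) (hW : IsChannel W) : 0 ≤ mutInfo p W := by
  have hterm : ∀ x y, p x * W x y - p x * outDist p W y
      ≤ p x * W x y * log (W x y / outDist p W y) := by
    intro x y
    rcases (mul_nonneg (hp.1 x) ((hW x).1 y)).eq_or_lt with hpW | hpW
    · rw [← hpW, zero_mul, zero_sub, neg_nonpos]
      exact mul_nonneg (hp.1 x) (outDist_nonneg hp.1 hW y)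
    · have hWxy : 0 < W x y := pos_of_mul_pos_right hpW (hp.1 x)
      have hout : 0 < outDist p W y := hpW.trans_le (mul_le_outDist hp.1 hW x y)
      have hlog := mul_le_mul_of_nonneg_left (one_sub_inv_le_log_of_pos (div_pos hWxy hout)) hpW.le
      have hcancel : p x * W x y * (outDist p W y / W x y) = p x * outDist p W y := by
        field_simp
      rw [inv_div, mul_one_sub, hcancel] at hlog
      exact hlog
  calc (0 : ℝ) = ∑ x, ∑ y, p x * W x y - ∑ x, ∑ y, p x * outDist p W y := by
        rw [sum_sum_mul_eq_one hp hW, ← sum_mul_sum, hp.2, sum_outDist hp hW]; ring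
    _ ≤ mutInfo p W := by
        rw [← sum_sub_distrib]
        refine sum_le_sum fun x _ => ?_
        rw [← sum_sub_distrib]
        exact sum_le_sum fun y _ => hterm x y

/-- Gibbs' inequality: the output distribution minimizes `r ↦ ∑ p W log (W / r)` over
sub-probability vectors `r`. -/
lemma mutInfo_le_sum_mul_log_div (hp : IsProbVec p) (hW : IsChannel W) {r : β → ℝ}
    (hr0 : ∀ y, 0 ≤ r y) (hr1 : ∑ y, r y ≤ 1) (hr : ∀ y, 0 < outDist p W y → 0 < r y) :
    mutInfo p W ≤ ∑ x, ∑ y, p x * W x y * log (W x y / r y) := by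
  set out := outDist p W
  have hterm : ∀ x y, p x * W x y * log (W x y / out y)
      ≤ p x * W x y * log (W x y / r y) + p x * W x y * (r y / out y - 1) := by
    intro x y
    rcases (mul_nonneg (hp.1 x) ((hW x).1 y)).eq_or_lt with hpW | hpW
    · simp [← hpW]
    · have hWxy : 0 < W x y := pos_of_mul_pos_right hpW (hp.1 x)
      have hout : 0 < out y := hpW.trans_le (mul_le_outDist hp.1 hW x y)
      have hry : 0 < r y := hr y hout
      have hsplit : log (W x y / out y) = log (W x y / r y) + log (r y / out y) := by
        rw [← log_mul (div_pos hWxy hry).ne' (div_pos hry hout).ne']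
        field_simp
      rw [hsplit, mul_add]
      gcongr
      exact log_le_sub_one_of_pos (div_pos hry hout)
  have hslack : ∑ x, ∑ y, p x * W x y * (r y / out y - 1) ≤ 0 := by
    have hy : ∀ y, out y * (r y / out y - 1) ≤ r y - out y := by
      intro y
      rcases (show 0 ≤ out y from outDist_nonneg hp.1 hW y).eq_or_lt with hout | hout
      · rw [← hout]
        simpa using hr0 y
      · rw [mul_sub, mul_div_cancel₀ _ hout.ne', mul_one]
    calc ∑ x, ∑ y, p x * W x y * (r y / out y - 1) = ∑ y, out y * (r y / out y - 1) := by
          rw [sum_comm]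
          simp_rw [out, outDist, sum_mul]
      _ ≤ ∑ y, (r y - out y) := sum_le_sum fun y _ => hy y
      _ ≤ 0 := by rw [sum_sub_distrib, sum_outDist hp hW]; linarith
  calc mutInfo p W
      ≤ ∑ x, ∑ y, (p x * W x y * log (W x y / r y) + p x * W x y * (r y / out y - 1)) :=
        sum_le_sum fun x _ => sum_le_sum fun y _ => hterm x y
    _ ≤ ∑ x, ∑ y, p x * W x y * log (W x y / r y) := by
        simp_rw [sum_add_distrib]
        linarith

lemma mutInfo_le_log_card (hp : IsProbVec p) (hW : IsChannel W) :
    mutInfo p W ≤ log (Fintype.card β) := by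
  set K : ℝ := (Fintype.card β : ℝ)
  have hK : ∀ _ : β, 0 < K := fun y => Nat.cast_pos.2 (Fintype.card_pos_iff.2 ⟨y⟩)
  have hr1 : ∑ _ : β, K⁻¹ ≤ 1 := by
    rw [sum_const, card_univ, nsmul_eq_mul]
    exact mul_inv_le_one
  calc mutInfo p W ≤ ∑ x, ∑ y, p x * W x y * log (W x y / K⁻¹) :=
        mutInfo_le_sum_mul_log_div hp hW (fun _ => by positivity) hr1
          fun y _ => inv_pos.2 (hK y)
    _ ≤ ∑ x, ∑ y, p x * W x y * log K := by
        refine sum_le_sum fun x _ => sum_le_sum fun y _ => ?_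
        rcases ((hW x).1 y).eq_or_lt with hWxy | hWxy
        · simp [← hWxy]
        refine mul_le_mul_of_nonneg_left ?_ (mul_nonneg (hp.1 x) hWxy.le)
        rw [div_inv_eq_mul]
        exact log_le_log (mul_pos hWxy (hK y)) (mul_le_of_le_one_left (hK y).le (hW.le_one x y))
    _ = log K := by simp_rw [← sum_mul, sum_sum_mul_eq_one hp hW, one_mul]

end Channel

section Relabel

variable {α α' β β' : Type} [Fintype α] [Fintype α'] {p : α → ℝ} {W : α → β → ℝ}
  (e : α' ≃ α) (f : β' ≃ β)

lemma IsProbVec.comp_equiv (hp : IsProbVec p) : IsProbVec (p ∘ e) :=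
  ⟨fun x => hp.1 (e x), (e.sum_comp p).trans hp.2⟩

lemma outDist_comp_equiv (y : β') :
    outDist (p ∘ e) (fun x y => W (e x) (f y)) y = outDist p W (f y) :=
  e.sum_comp fun x => p x * W x (f y)

lemma outEnergy_comp_equiv [Fintype β] [Fintype β'] (b : β → ℝ) :
    outEnergy (p ∘ e) (fun x y => W (e x) (f y)) (b ∘ f) = outEnergy p W b := by
  simp only [outEnergy, outDist_comp_equiv, Function.comp_apply]
  exact f.sum_comp fun y => outDist p W y * b y

lemma mutInfo_comp_equiv [Fintype β] [Fintype β'] :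
    mutInfo (p ∘ e) (fun x y => W (e x) (f y)) = mutInfo p W := by
  simp only [mutInfo, outDist_comp_equiv, Function.comp_apply]
  rw [e.sum_comp fun x => ∑ y, p x * W x (f y) * log (W x (f y) / outDist p W (f y))]
  exact sum_congr rfl fun x _ => f.sum_comp fun y => p x * W x y * log (W x y / outDist p W y)

end Relabel

lemma sum_prod_mul_apply {ι β : Type} [Fintype ι] [DecidableEq ι] [Fintype β]
    (R : ι → β → ℝ) (hR : ∀ j, ∑ c, R j c = 1) (i : ι) (g : β → ℝ) :
    ∑ y : ι → β, (∏ j, R j (y j)) * g (y i) = ∑ c, R i c * g c := by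
  have hfactor : ∀ y : ι → β,
      (∏ j, R j (y j)) * g (y i) = ∏ j, R j (y j) * (if j = i then g (y j) else 1) := by
    intro y
    rw [prod_mul_distrib, prod_ite_eq' univ i fun j => g (y j), if_pos (mem_univ i)]
  simp_rw [hfactor, ← Fintype.prod_sum (fun j c => R j c * if j = i then g c else 1)]
  rw [← mul_prod_erase univ _ (mem_univ i), prod_eq_one fun j hj => ?_, mul_one]
  · simp
  · simp [ne_of_mem_erase hj, hR j]

section Memoryless

variable {α β : Type} [Fintype β] {n : ℕ} {W : α → β → ℝ}

lemma isChannel_nCh (hW : IsChannel W) : IsChannel (nCh W n) := fun x =>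
  ⟨fun y => prod_nonneg fun i _ => (hW _).1 _, by
    simp_rw [nCh, ← Fintype.prod_sum fun i c => W (x i) c, (hW _).2, prod_const_one]⟩

variable [Fintype α] [DecidableEq α]

def avgMarginal (p : (Fin n → α) → ℝ) (a : α) : ℝ :=
  (∑ i, ∑ x, if x i = a then p x else 0) / n

lemma natCast_mul_sum_avgMarginal_mul (p : (Fin n → α) → ℝ) (F : α → ℝ) :
    n * ∑ a, avgMarginal p a * F a = ∑ x, p x * ∑ i, F (x i) := by
  have hmul : ∀ a, n * avgMarginal p a = ∑ i, ∑ x, if x i = a then p x else 0 := by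
    intro a
    rcases n.eq_zero_or_pos with rfl | hn
    · simp
    · exact mul_div_cancel₀ _ (by positivity)
  calc n * ∑ a, avgMarginal p a * F a = ∑ a, ∑ i, ∑ x, if x i = a then p x * F a else 0 := by
        simp_rw [mul_sum, ← mul_assoc, hmul, sum_mul, ite_mul, zero_mul]
    _ = ∑ x, ∑ i, ∑ a, if x i = a then p x * F a else 0 := by
        rw [sum_comm, sum_congr rfl fun i _ => sum_comm, sum_comm]
    _ = ∑ x, p x * ∑ i, F (x i) := by
        simp_rw [sum_ite_eq, mem_univ, if_true, mul_sum]

lemma avgMarginal_nonneg {p : (Fin n → α) → ℝ} (hp : ∀ x, 0 ≤ p x) (a : α) :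
    0 ≤ avgMarginal p a :=
  div_nonneg (sum_nonneg fun i _ => sum_nonneg fun x _ => by split_ifs <;> simp [hp x])
    n.cast_nonneg

lemma IsProbVec.avgMarginal (hn : 0 < n) {p : (Fin n → α) → ℝ} (hp : IsProbVec p) :
    IsProbVec (avgMarginal p) := by
  refine ⟨avgMarginal_nonneg hp.1, mul_left_cancel₀ (Nat.cast_ne_zero.2 hn.ne') ?_⟩
  simpa [← sum_mul, hp.2] using natCast_mul_sum_avgMarginal_mul p fun _ => 1

lemma avgMarginal_pos {p : (Fin n → α) → ℝ} (hp : ∀ x, 0 ≤ p x) {x : Fin n → α}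
    (hx : 0 < p x) (i : Fin n) : 0 < avgMarginal p (x i) := by
  have hterm_nonneg : ∀ j x', 0 ≤ if x' j = x i then p x' else 0 := fun j x' => by
    split_ifs <;> simp [hp x']
  refine div_pos (sum_pos' (fun j _ => sum_nonneg fun x' _ => hterm_nonneg j x')
    ⟨i, mem_univ i, sum_pos' (fun x' _ => hterm_nonneg i x') ⟨x, mem_univ x, ?_⟩⟩) ?_
  · simpa using hx
  · exact_mod_cast i.pos

lemma sum_sum_nCh_mul_sum (hW : IsChannel W) (p : (Fin n → α) → ℝ) (g : α → β → ℝ) :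
    ∑ x, ∑ y, p x * nCh W n x y * ∑ i, g (x i) (y i)
      = n * ∑ a, ∑ c, avgMarginal p a * W a c * g a c := by
  calc ∑ x, ∑ y, p x * nCh W n x y * ∑ i, g (x i) (y i)
      = ∑ x, p x * ∑ i, ∑ y : Fin n → β, (∏ j, W (x j) (y j)) * g (x i) (y i) := by
        refine sum_congr rfl fun x _ => ?_
        simp_rw [nCh, mul_sum, ← mul_assoc]
        exact sum_comm
    _ = ∑ x, p x * ∑ i, ∑ c, W (x i) c * g (x i) c := by
        refine sum_congr rfl fun x _ => ?_
        simp_rw [sum_prod_mul_apply (fun j => W (x j)) (fun j => (hW _).2)]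
    _ = n * ∑ a, ∑ c, avgMarginal p a * W a c * g a c := by
        rw [← natCast_mul_sum_avgMarginal_mul p fun a => ∑ c, W a c * g a c]
        simp_rw [mul_sum, mul_assoc]

lemma outEnergy_nCh_blockE (hW : IsChannel W) (p : (Fin n → α) → ℝ) (b : β → ℝ) :
    outEnergy p (nCh W n) (blockE b) = n * outEnergy (avgMarginal p) W b := by
  rw [outEnergy_eq_sum_sum, outEnergy_eq_sum_sum]
  exact sum_sum_nCh_mul_sum hW p fun _ c => b c

lemma mutInfo_nCh_le {p : (Fin n → α) → ℝ} (hp : IsProbVec p) (hW : IsChannel W) :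
    mutInfo p (nCh W n) ≤ n * mutInfo (avgMarginal p) W := by
  set out := outDist (avgMarginal p) W
  have hsupport : ∀ {x y}, 0 < p x * nCh W n x y → ∀ i, 0 < W (x i) (y i) ∧ 0 < out (y i) := by
    intro x y hpV i
    have hpx : 0 < p x := pos_of_mul_pos_left hpV ((isChannel_nCh hW x).1 y)
    have hV : nCh W n x y ≠ 0 := (pos_of_mul_pos_right hpV (hp.1 x)).ne'
    have hWi : 0 < W (x i) (y i) := ((hW _).1 _).lt_of_ne' (prod_ne_zero_iff.1 hV i (mem_univ i))
    exact ⟨hWi, (mul_pos (avgMarginal_pos hp.1 hpx i) hWi).trans_le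
      (mul_le_outDist (avgMarginal_nonneg hp.1) hW _ _)⟩
  have hr : ∀ y, 0 < outDist p (nCh W n) y → 0 < ∏ i, out (y i) := by
    intro y hy
    obtain ⟨x, -, hpV⟩ := (sum_pos_iff_of_nonneg fun x _ =>
      mul_nonneg (hp.1 x) ((isChannel_nCh hW x).1 y)).1 hy
    exact prod_pos fun i _ => (hsupport hpV i).2
  have hr1 : ∑ y : Fin n → β, ∏ i, out (y i) ≤ 1 := by
    rw [← Fintype.sum_pow]
    rcases n.eq_zero_or_pos with rfl | hn
    · simp
    · rw [sum_outDist (hp.avgMarginal hn) hW, one_pow]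
  calc mutInfo p (nCh W n)
      ≤ ∑ x, ∑ y, p x * nCh W n x y * log (nCh W n x y / ∏ i, out (y i)) :=
        mutInfo_le_sum_mul_log_div hp (isChannel_nCh hW)
          (fun y => prod_nonneg fun i _ => outDist_nonneg (avgMarginal_nonneg hp.1) hW _) hr1 hr
    _ = ∑ x, ∑ y, p x * nCh W n x y * ∑ i, log (W (x i) (y i) / out (y i)) := by
        refine sum_congr rfl fun x _ => sum_congr rfl fun y _ => ?_
        rcases (mul_nonneg (hp.1 x) ((isChannel_nCh hW x).1 y)).eq_or_lt with hpV | hpV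
        · simp [← hpV]
        · rw [nCh, ← prod_div_distrib,
            log_prod fun i _ => (div_pos (hsupport hpV i).1 (hsupport hpV i).2).ne']
    _ = n * mutInfo (avgMarginal p) W := sum_sum_nCh_mul_sum hW p fun a c => log (W a c / out c)

end Memoryless

lemma nCh_one {α β : Type} (W : α → β → ℝ) :
    nCh W 1 = fun x y => W (Equiv.funUnique (Fin 1) α x) (Equiv.funUnique (Fin 1) β y) := by
  ext x y
  simp [nCh]

lemma blockE_one {β : Type} (b : β → ℝ) :
    blockE b (n := 1) = b ∘ Equiv.funUnique (Fin 1) β := by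
  ext y
  simp [blockE]

lemma iInf_le_of_forall_le_of_nonneg {ι : Type} [Finite ι] {f : ι → ℝ} {c : ℝ}
    (hf : ∀ i, f i ≤ c) (hc : 0 ≤ c) : ⨅ i, f i ≤ c :=
  (Real.sInf_le_sSup _ (Set.finite_range f).bddBelow (Set.finite_range f).bddAbove).trans
    (Real.iSup_le hf hc)

section Capacity

variable {𝓧 𝓨 : Type} [Fintype 𝓧] [Fintype 𝓨] {L : ℕ} {W : Fin L → 𝓧 → 𝓨 → ℝ}

def admissibleRates (W : Fin L → 𝓧 → 𝓨 → ℝ) (b : 𝓨 → ℝ) (B : ℝ) (n : ℕ) : Set ℝ :=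
  { r | ∃ p : (Fin n → 𝓧) → ℝ, IsProbVec p ∧
      (∀ ℓ, (n : ℝ) * B ≤ outEnergy p (nCh (W ℓ) n) (blockE b)) ∧
      r = ⨅ ℓ, mutInfo p (nCh (W ℓ) n) }

lemma bddAbove_admissibleRates (hW : ∀ ℓ, IsChannel (W ℓ)) (b : 𝓨 → ℝ) (B : ℝ) (n : ℕ) :
    BddAbove (admissibleRates W b B n) := by
  refine ⟨log (Fintype.card (Fin n → 𝓨)), ?_⟩
  rintro r ⟨p, hp, -, rfl⟩
  exact iInf_le_of_forall_le_of_nonneg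
    (fun ℓ => mutInfo_le_log_card hp (isChannel_nCh (hW ℓ))) (log_natCast_nonneg _)

lemma CnEq_nonneg (hW : ∀ ℓ, IsChannel (W ℓ)) (b : 𝓨 → ℝ) (B : ℝ) (n : ℕ) :
    0 ≤ CnEq W b B n := by
  refine Real.sSup_nonneg ?_
  rintro r ⟨p, hp, -, rfl⟩
  exact Real.iInf_nonneg fun ℓ => mutInfo_nonneg hp (isChannel_nCh (hW ℓ))

lemma iInf_mutInfo_mem_admissibleRates_one {b : 𝓨 → ℝ} {B : ℝ} {q : 𝓧 → ℝ}
    (hq : IsProbVec q) (hE : ∀ ℓ, B ≤ outEnergy q (W ℓ) b) :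
    ⨅ ℓ, mutInfo q (W ℓ) ∈ admissibleRates W b B 1 := by
  refine ⟨q ∘ Equiv.funUnique (Fin 1) 𝓧, hq.comp_equiv _, fun ℓ => ?_, ?_⟩
  · rw [nCh_one, blockE_one, outEnergy_comp_equiv, Nat.cast_one, one_mul]
    exact hE ℓ
  · simp only [nCh_one, mutInfo_comp_equiv]

lemma CnEq_le_mul_CnEq_one [DecidableEq 𝓧] (hW : ∀ ℓ, IsChannel (W ℓ)) (b : 𝓨 → ℝ) (B : ℝ)
    {n : ℕ} (hn : 0 < n) : CnEq W b B n ≤ n * CnEq W b B 1 := by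
  refine Real.sSup_le ?_ (mul_nonneg n.cast_nonneg (CnEq_nonneg hW b B 1))
  rintro r ⟨p, hp, hE, rfl⟩
  have hEavg : ∀ ℓ, B ≤ outEnergy (avgMarginal p) (W ℓ) b := fun ℓ =>
    le_of_mul_le_mul_left ((outEnergy_nCh_blockE (hW ℓ) p b) ▸ hE ℓ) (Nat.cast_pos.2 hn)
  calc ⨅ ℓ, mutInfo p (nCh (W ℓ) n) ≤ ⨅ ℓ, n * mutInfo (avgMarginal p) (W ℓ) :=
        ciInf_mono (Set.finite_range _).bddBelow fun ℓ => mutInfo_nCh_le hp (hW ℓ)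
    _ = n * ⨅ ℓ, mutInfo (avgMarginal p) (W ℓ) := (Real.mul_iInf_of_nonneg n.cast_nonneg _).symm
    _ ≤ n * CnEq W b B 1 := by
        gcongr
        exact le_csSup (bddAbove_admissibleRates hW b B 1)
          (iInf_mutInfo_mem_admissibleRates_one (hp.avgMarginal hn) hEavg)

end Capacity

theorem Ccap_eq_single_letter_general
    {𝓧 𝓨 : Type} [Fintype 𝓧] [Fintype 𝓨] {L : ℕ}
    (W : Fin L → 𝓧 → 𝓨 → ℝ) (hW : ∀ ℓ, IsChannel (W ℓ))
    (b : 𝓨 → ℝ)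
    (B : ℝ) :
    CcapEq W b B = CnEq W b B 1 := by
  classical
  have hle : ∀ n : ℕ+, CnEq W b B n / n ≤ CnEq W b B 1 := fun n => by
    rw [div_le_iff₀ (Nat.cast_pos.2 n.pos), mul_comm]
    exact CnEq_le_mul_CnEq_one hW b B n.pos
  refine le_antisymm (ciSup_le hle) ?_
  calc CnEq W b B 1 = CnEq W b B ((1 : ℕ+) : ℕ) / ((1 : ℕ+) : ℕ) := by simp
    _ ≤ CcapEq W b B := le_ciSup ⟨_, Set.forall_mem_range.2 hle⟩ 1

/-- **The multicast capacity-energy function equals its single-letter version:**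
for any multicast DMC and any `0 ≤ B ≤ B_max`,
`C(B) = sup_{n ≥ 1} (1/n)·C_n(B) = C_1(B)`. -/
theorem Ccap_eq_single_letter
    {𝓧 𝓨 : Type} [Fintype 𝓧] [Fintype 𝓨] [Nonempty 𝓧] {L : ℕ} (hL : 0 < L)
    (W : Fin L → 𝓧 → 𝓨 → ℝ) (hW : ∀ ℓ, IsChannel (W ℓ))
    (b : 𝓨 → ℝ) (hb : ∀ y, 0 ≤ b y)
    (B : ℝ) (hB0 : 0 ≤ B) (hB : B ≤ Bmax W b) :
    CcapEq W b B = CnEq W b B 1 :=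
  Ccap_eq_single_letter_general W hW b B

end
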